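/- arXiv:2205.14192 — 7 statements merged into one kernel-verified Lean document; each statement's English description precedes it below -/
import Mathlib

section
/- Let K ⊆ ℝⁿ be a polyhedron (a finite intersection of closed half-spaces) with nonempty interior. Then there exist ε > 0 and δ > 0 such that for every x ∈ K there exists x₀ ∈ K with ‖x − x₀‖ ≤ δ and {y ∈ ℝⁿ : ‖y − x₀‖ < ε} ⊆ K. -/
/-!
Fix a closed ball `closedBall z r ⊆ K`; a closed ball `closedBall c ρ` lies in the half-space
`⟪a, ·⟫ ≤ β` exactly when `⟪a, c⟫ + ρ ‖a‖ ≤ β`. Given `x ∈ K`, the constraints with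
`⟪aᵢ, x - z⟫ ≤ 0` keep at `x` the margin `r ‖aᵢ‖` they have at `z`, while the remaining ones
strictly decrease along `z - x`, hence (after rescaling) along a direction `v` with
`⟪aᵢ, v⟫ ≤ -‖aᵢ‖`. As there are only finitely many sets of constraints, `v` can be chosen of norm
at most a constant `D` independent of `x`, and `x + (r / (D + 1)) • v` is the centre of a ball of
radius `r / (D + 1)` inside `K`.
-/

open Set Metric
open scoped InnerProductSpace

theorem exists_uniform_norm_bound_of_finite {α E : Type*} [Finite α] [Norm E]
    (P : α → E → Prop) :
    ∃ D, 0 ≤ D ∧ ∀ s, (∃ v, P s v) → ∃ v, ‖v‖ ≤ D ∧ P s v := by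
  have hbound : ∀ s, ∃ D : ℝ, (∃ v, P s v) → ∃ v, ‖v‖ ≤ D ∧ P s v := fun s => by
    by_cases h : ∃ v, P s v
    · obtain ⟨v, hv⟩ := h
      exact ⟨‖v‖, fun _ => ⟨v, le_rfl, hv⟩⟩
    · exact ⟨0, fun h' => (h h').elim⟩
  choose D hD using hbound
  obtain ⟨M, hM⟩ := Finite.exists_le D
  refine ⟨max M 0, le_max_right _ _, fun s hs => ?_⟩
  obtain ⟨v, hvD, hv⟩ := hD s hs
  exact ⟨v, hvD.trans ((hM s).trans (le_max_left _ _)), hv⟩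

section InnerProductSpace

variable {E : Type*} [NormedAddCommGroup E] [InnerProductSpace ℝ E]

theorem closedBall_subset_setOf_inner_le_iff {a c : E} {ρ β : ℝ} (hρ : 0 ≤ ρ) :
    closedBall c ρ ⊆ {y | ⟪a, y⟫_ℝ ≤ β} ↔ ⟪a, c⟫_ℝ + ρ * ‖a‖ ≤ β := by
  constructor
  · intro h
    have hmem : c + (ρ * ‖a‖⁻¹) • a ∈ closedBall c ρ := by
      rw [mem_closedBall, dist_eq_norm, add_sub_cancel_left, norm_smul, Real.norm_eq_abs,
        abs_of_nonneg (by positivity), mul_assoc]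
      exact mul_le_of_le_one_right hρ (inv_mul_le_one_of_le₀ le_rfl (norm_nonneg a))
    have hinner : ⟪a, (ρ * ‖a‖⁻¹) • a⟫_ℝ = ρ * ‖a‖ := by
      rw [real_inner_smul_right, real_inner_self_eq_norm_sq]
      rcases eq_or_ne ‖a‖ 0 with ha | ha
      · simp [ha]
      · field_simp
    simpa [inner_add_right, hinner] using h hmem
  · intro h y hy
    have hdist : ‖y - c‖ ≤ ρ := by rwa [mem_closedBall, dist_eq_norm] at hy
    calc ⟪a, y⟫_ℝ = ⟪a, c⟫_ℝ + ⟪a, y - c⟫_ℝ := by rw [inner_sub_right]; ring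
      _ ≤ ⟪a, c⟫_ℝ + ‖a‖ * ‖y - c‖ := by gcongr; exact real_inner_le_norm a _
      _ ≤ ⟪a, c⟫_ℝ + ρ * ‖a‖ := by nlinarith [norm_nonneg a]
      _ ≤ β := h

theorem closedBall_subset_polyhedron_iff {ι : Type*} {a : ι → E} {b : ι → ℝ} {c : E} {ρ : ℝ}
    (hρ : 0 ≤ ρ) :
    closedBall c ρ ⊆ {x | ∀ i, ⟪a i, x⟫_ℝ ≤ b i} ↔ ∀ i, ⟪a i, c⟫_ℝ + ρ * ‖a i‖ ≤ b i := by
  simp only [ofPred_forall, subset_iInter_iff, closedBall_subset_setOf_inner_le_iff hρ]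

theorem exists_inner_le_neg_norm_of_inner_neg {ι : Type*} (s : Finset ι) (a : ι → E) {w : E}
    (hw : ∀ i ∈ s, ⟪a i, w⟫_ℝ < 0) :
    ∃ v : E, ∀ i ∈ s, ⟪a i, v⟫_ℝ ≤ -‖a i‖ := by
  set C := ∑ j ∈ s, ‖a j‖ / -⟪a j, w⟫_ℝ
  refine ⟨C • w, fun i hi => ?_⟩
  have hneg := hw i hi
  have hC : ‖a i‖ / -⟪a i, w⟫_ℝ ≤ C :=
    Finset.single_le_sum (fun j hj => div_nonneg (norm_nonneg _) (neg_nonneg.2 (hw j hj).le)) hi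
  rw [div_le_iff₀ (neg_pos.2 hneg)] at hC
  rw [real_inner_smul_right]
  linarith

theorem exists_uniform_interior_closedBall_of_closedBall_subset {ι : Type*} [Fintype ι]
    (a : ι → E) (b : ι → ℝ) {z : E} {r : ℝ} (hr : 0 < r)
    (hz : closedBall z r ⊆ {x | ∀ i, ⟪a i, x⟫_ℝ ≤ b i}) :
    ∃ ε > (0 : ℝ), ∀ x ∈ {x | ∀ i, ⟪a i, x⟫_ℝ ≤ b i}, ∃ x₀,
      ‖x - x₀‖ ≤ r ∧ closedBall x₀ ε ⊆ {x | ∀ i, ⟪a i, x⟫_ℝ ≤ b i} := by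
  classical
  rw [closedBall_subset_polyhedron_iff hr.le] at hz
  obtain ⟨D, hD0, hD⟩ :=
    exists_uniform_norm_bound_of_finite fun (s : Finset ι) (v : E) => ∀ i ∈ s, ⟪a i, v⟫_ℝ ≤ -‖a i‖
  set t := r / (D + 1)
  have ht : 0 < t := by positivity
  have htD : t * (D + 1) = r := div_mul_cancel₀ r (by positivity)
  refine ⟨t, ht, fun x hx => ?_⟩
  set s := Finset.univ.filter fun i => 0 < ⟪a i, x - z⟫_ℝ
  obtain ⟨v, hvD, hv⟩ := hD s <| exists_inner_le_neg_norm_of_inner_neg s a (w := z - x) fun i hi => by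
    rw [← neg_sub, inner_neg_right, neg_lt_zero]
    exact (Finset.mem_filter.1 hi).2
  refine ⟨x + t • v, ?_, (closedBall_subset_polyhedron_iff ht.le).2 fun i => ?_⟩
  · rw [sub_add_cancel_left, norm_neg, norm_smul, Real.norm_of_nonneg ht.le]
    nlinarith
  rw [inner_add_right, real_inner_smul_right]
  by_cases hi : i ∈ s
  · nlinarith [hv i hi, hx i]
  · have hxz : ⟪a i, x⟫_ℝ ≤ ⟪a i, z⟫_ℝ := by
      have : ⟪a i, x - z⟫_ℝ ≤ 0 := by simpa [s] using hi
      rwa [inner_sub_right, sub_nonpos] at this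
    have hav : ⟪a i, v⟫_ℝ ≤ D * ‖a i‖ :=
      (real_inner_le_norm _ _).trans (by nlinarith [norm_nonneg (a i)])
    nlinarith [hz i, norm_nonneg (a i)]

end InnerProductSpace

/-- A polyhedron `K ⊆ ℝⁿ` with nonempty interior satisfies a uniform
interior-ball condition: there exist `ε > 0` and `δ > 0` such that every `x ∈ K` is within
distance `δ` of a point `x₀ ∈ K` around which the open ball of radius `ε` lies in `K`. -/
theorem polyhedron_uniform_interior_ball
    {n m : ℕ} (a : Fin m → EuclideanSpace ℝ (Fin n)) (b : Fin m → ℝ)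
    (K : Set (EuclideanSpace ℝ (Fin n)))
    (hK : K = {x : EuclideanSpace ℝ (Fin n) | ∀ i, ⟪a i, x⟫_ℝ ≤ b i})
    (hint : (interior K).Nonempty) :
    ∃ ε > (0 : ℝ), ∃ δ > (0 : ℝ), ∀ x ∈ K, ∃ x₀ ∈ K,
      ‖x - x₀‖ ≤ δ ∧ Metric.ball x₀ ε ⊆ K := by
  obtain ⟨z, hz⟩ := hint
  obtain ⟨r, hr, hzr⟩ := nhds_basis_closedBall.mem_iff.1 (mem_interior_iff_mem_nhds.1 hz)
  subst hK
  obtain ⟨ε, hε, hball⟩ := exists_uniform_interior_closedBall_of_closedBall_subset a b hr hzr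
  refine ⟨ε, hε, r, hr, fun x hx => ?_⟩
  obtain ⟨x₀, hxx₀, hx₀⟩ := hball x hx
  exact ⟨x₀, hx₀ (mem_closedBall_self hε.le), hxx₀, ball_subset_closedBall.trans hx₀⟩
end

section
/- Let K ⊆ ℝⁿ be a closed convex set with 0 ∈ K, and let f̄ : ℝⁿ → ℝ be differentiable with ℓ-Lipschitz gradient which is μ-strongly convex outside a ball of radius R > 0 relative to K, i.e. (x − y)ᵀ(∇f̄(x) − ∇f̄(y)) ≥ μ‖x − y‖² for all x, y ∈ K with ‖x − y‖ ≥ R. Then for every β > 0, the integral ∫_K e^{−β·f̄(x)} dx (with respect to Lebesgue measure on ℝⁿ) is finite. -/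
open Set MeasureTheory
open scoped InnerProductSpace

/-!
Along the segment from `0` to `x ∈ K`, the gradient satisfies
`⟪g (t • x) - g 0, x⟫ ≥ μ t ‖x‖² - (μ + ℓ) R ‖x‖`: strong monotonicity gives this once
`t ‖x‖ ≥ R`, and the Lipschitz bound pays for the remaining stretch of length `R`.
Integrating along the segment, `f̄ x ≥ f̄ 0 - (‖g 0‖ + (μ + ℓ) R) ‖x‖ + μ/2 ‖x‖²` on `K`, so
`e^{-β f̄}` is dominated on `K` by a multiple of the Gaussian `e^{-βμ ‖x‖² / 4}`.
-/

section GradientGrowth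

variable {E : Type*} [NormedAddCommGroup E] [InnerProductSpace ℝ E] {K : Set E} {g : E → E}
  {ℓ μ R : ℝ}

theorem add_le_of_hasGradientAt_of_le_inner [CompleteSpace E] {f : E → ℝ}
    (hf : ∀ z, HasGradientAt f (g z) z) {x v : E} {a b : ℝ}
    (hbound : ∀ t ∈ Icc (0 : ℝ) 1, a + b * t ≤ ⟪g (x + t • v), v⟫_ℝ) :
    f x + a + b / 2 ≤ f (x + v) := by
  set φ : ℝ → ℝ := fun t => f (x + t • v) - (a * t + b / 2 * t ^ 2)
  have hφ : ∀ t, HasDerivAt φ (⟪g (x + t • v), v⟫_ℝ - (a + b * t)) t := by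
    intro t
    have hline : HasDerivAt (fun t : ℝ => x + t • v) v t := by
      simpa using ((hasDerivAt_id t).smul_const v).const_add x
    have hpoly : HasDerivAt (fun t : ℝ => a * t + b / 2 * t ^ 2) (a + b * t) t :=
      (((hasDerivAt_id t).const_mul a).add (((hasDerivAt_id t).pow 2).const_mul (b / 2))).congr_deriv
        (by simp only [mul_one, id]; ring)
    exact ((hf _).hasFDerivAt.comp_hasDerivAt t hline).sub hpoly
  have hmono : MonotoneOn φ (Icc 0 1) := by
    refine monotoneOn_of_hasDerivWithinAt_nonneg (convex_Icc 0 1)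
      (fun t _ => (hφ t).continuousAt.continuousWithinAt) (fun t _ => (hφ t).hasDerivWithinAt)
      fun t ht => sub_nonneg.mpr (hbound t (interior_subset ht))
  have := hmono (left_mem_Icc.mpr zero_le_one) (right_mem_Icc.mpr zero_le_one) zero_le_one
  simp only [φ, zero_smul, add_zero, one_smul] at this
  linarith

theorem sub_le_inner_of_lipschitz_of_strongly_monotone_far (hμℓ : 0 ≤ μ + ℓ) (hR : 0 ≤ R)
    (hlip : ∀ x y, ‖g x - g y‖ ≤ ℓ * ‖x - y‖)
    (hconv : ∀ x ∈ K, ∀ y ∈ K, R ≤ ‖x - y‖ → μ * ‖x - y‖ ^ 2 ≤ ⟪x - y, g x - g y⟫_ℝ)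
    {x y : E} (hx : x ∈ K) (hy : y ∈ K) :
    μ * ‖x - y‖ ^ 2 - (μ + ℓ) * R * ‖x - y‖ ≤ ⟪x - y, g x - g y⟫_ℝ := by
  rcases le_or_gt R ‖x - y‖ with hfar | hnear
  · nlinarith [hconv x hx y hy hfar, mul_nonneg (mul_nonneg hμℓ hR) (norm_nonneg (x - y))]
  · have hCS : -(ℓ * ‖x - y‖ ^ 2) ≤ ⟪x - y, g x - g y⟫_ℝ := by
      have := (abs_real_inner_le_norm (x - y) (g x - g y)).trans
        (mul_le_mul_of_nonneg_left (hlip x y) (norm_nonneg _))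
      nlinarith [neg_abs_le ⟪x - y, g x - g y⟫_ℝ]
    nlinarith [mul_nonneg (mul_nonneg hμℓ (sub_nonneg.mpr hnear.le)) (norm_nonneg (x - y))]

theorem le_inner_along_ray (hK : StarConvex ℝ 0 K) (hμℓ : 0 ≤ μ + ℓ) (hR : 0 ≤ R)
    (hlip : ∀ x y, ‖g x - g y‖ ≤ ℓ * ‖x - y‖)
    (hconv : ∀ x ∈ K, ∀ y ∈ K, R ≤ ‖x - y‖ → μ * ‖x - y‖ ^ 2 ≤ ⟪x - y, g x - g y⟫_ℝ)
    {x : E} (hx : x ∈ K) {t : ℝ} (ht : t ∈ Icc (0 : ℝ) 1) :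
    ⟪g 0, x⟫_ℝ - (μ + ℓ) * R * ‖x‖ + μ * ‖x‖ ^ 2 * t ≤ ⟪g (t • x), x⟫_ℝ := by
  rcases ht.1.eq_or_lt with rfl | ht₀
  · rw [zero_smul, mul_zero, add_zero, sub_le_self_iff]
    exact mul_nonneg (mul_nonneg hμℓ hR) (norm_nonneg x)
  have h := sub_le_inner_of_lipschitz_of_strongly_monotone_far hμℓ hR hlip hconv
    (hK.smul_mem hx ht.1 ht.2) (hK.mem ⟨x, hx⟩)
  rw [sub_zero, norm_smul, Real.norm_of_nonneg ht.1, real_inner_smul_left] at h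
  have hsplit : ⟪g (t • x), x⟫_ℝ = ⟪g 0, x⟫_ℝ + ⟪x, g (t • x) - g 0⟫_ℝ := by
    rw [inner_sub_right, real_inner_comm x, real_inner_comm x]; ring
  -- `h` is the desired bound multiplied by `t > 0`
  nlinarith

theorem quadratic_le_of_hasGradientAt [CompleteSpace E] {f : E → ℝ}
    (hf : ∀ z, HasGradientAt f (g z) z) (hK : StarConvex ℝ 0 K) (hμℓ : 0 ≤ μ + ℓ) (hR : 0 ≤ R)
    (hlip : ∀ x y, ‖g x - g y‖ ≤ ℓ * ‖x - y‖)
    (hconv : ∀ x ∈ K, ∀ y ∈ K, R ≤ ‖x - y‖ → μ * ‖x - y‖ ^ 2 ≤ ⟪x - y, g x - g y⟫_ℝ)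
    {x : E} (hx : x ∈ K) :
    f 0 - (‖g 0‖ + (μ + ℓ) * R) * ‖x‖ + μ / 2 * ‖x‖ ^ 2 ≤ f x := by
  have hgrowth := add_le_of_hasGradientAt_of_le_inner (x := 0) (v := x)
    (a := ⟪g 0, x⟫_ℝ - (μ + ℓ) * R * ‖x‖) (b := μ * ‖x‖ ^ 2) hf fun t ht => by
    rw [zero_add]; exact le_inner_along_ray hK hμℓ hR hlip hconv hx ht
  have hCS := real_inner_le_norm (-g 0) x
  rw [zero_add] at hgrowth
  rw [inner_neg_left, norm_neg] at hCS
  linarith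

end GradientGrowth

section Gaussian

variable {V : Type*} [NormedAddCommGroup V] [InnerProductSpace ℝ V] [FiniteDimensional ℝ V]
  [MeasurableSpace V] [BorelSpace V]

theorem integrable_exp_neg_mul_sq_norm {b : ℝ} (hb : 0 < b) :
    Integrable (fun x : V => Real.exp (-b * ‖x‖ ^ 2)) := by
  have h := (GaussianFourier.integrable_cexp_neg_mul_sq_norm_add (V := V)
    (b := (b : ℂ)) (by simpa using hb) 0 0).norm
  simpa only [zero_mul, add_zero, Complex.norm_exp, ← Complex.ofReal_pow, ← Complex.ofReal_neg,
    ← Complex.ofReal_mul, Complex.ofReal_re] using h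

theorem integrableOn_exp_neg_mul_of_quadratic_le {K : Set V} (hK : MeasurableSet K) {f : V → ℝ}
    (hf : Measurable f) {a c m β : ℝ} (hm : 0 < m) (hβ : 0 < β)
    (hgrowth : ∀ x ∈ K, a - c * ‖x‖ + m * ‖x‖ ^ 2 ≤ f x) :
    IntegrableOn (fun x => Real.exp (-β * f x)) K := by
  have hdom : ∀ x ∈ K, -β * f x ≤ β * (c ^ 2 / (2 * m) - a) + -(β * m / 2) * ‖x‖ ^ 2 := by
    intro x hx
    have hsq : c * ‖x‖ - m / 2 * ‖x‖ ^ 2 ≤ c ^ 2 / (2 * m) := by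
      rw [le_div_iff₀ (by positivity)]
      nlinarith [sq_nonneg (m * ‖x‖ - c)]
    nlinarith [mul_le_mul_of_nonneg_left (hgrowth x hx) hβ.le, mul_le_mul_of_nonneg_left hsq hβ.le]
  refine Integrable.mono'
    ((integrable_exp_neg_mul_sq_norm (b := β * m / 2) (by positivity)).const_mul
      (Real.exp (β * (c ^ 2 / (2 * m) - a)))).integrableOn
    (by fun_prop : Measurable fun x => Real.exp (-β * f x)).aestronglyMeasurable ?_
  filter_upwards [ae_restrict_mem hK] with x hx
  rw [Real.norm_of_nonneg (Real.exp_nonneg _), ← Real.exp_add]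
  exact Real.exp_le_exp.mpr (hdom x hx)

end Gaussian

/-- If `f̄` has an `ℓ`-Lipschitz gradient and is `μ`-strongly convex outside a
ball of radius `R` relative to a closed convex set `K` containing `0`, then for every `β > 0`
the Gibbs integrand `e^{-β f̄}` is (Lebesgue-)integrable on `K`. -/
theorem gibbs_integrand_integrableOn
    {n : ℕ} {K : Set (EuclideanSpace ℝ (Fin n))}
    (hK_cl : IsClosed K) (hK_conv : Convex ℝ K)
    (h0K : (0 : EuclideanSpace ℝ (Fin n)) ∈ K)
    (fbar : EuclideanSpace ℝ (Fin n) → ℝ)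
    (gbar : EuclideanSpace ℝ (Fin n) → EuclideanSpace ℝ (Fin n))
    (hgrad : ∀ x, HasGradientAt fbar (gbar x) x)
    (ℓ μ R : ℝ) (hℓ : 0 < ℓ) (hμ : 0 < μ) (hR : 0 < R)
    (hlip : ∀ x y, ‖gbar x - gbar y‖ ≤ ℓ * ‖x - y‖)
    (hconv : ∀ x ∈ K, ∀ y ∈ K, R ≤ ‖x - y‖ →
      μ * ‖x - y‖ ^ 2 ≤ ⟪x - y, gbar x - gbar y⟫_ℝ) :
    ∀ β : ℝ, 0 < β →
      IntegrableOn (fun x => Real.exp (-β * fbar x)) K volume := by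
  intro β hβ
  have hf : Differentiable ℝ fbar := fun x => (hgrad x).differentiableAt
  exact integrableOn_exp_neg_mul_of_quadratic_le hK_cl.measurableSet hf.continuous.measurable
    (half_pos hμ) hβ fun x hx => quadratic_le_of_hasGradientAt hgrad (hK_conv.starConvex h0K)
      (by positivity) hR.le hlip hconv hx
end

section
/- Let K ⊆ ℝⁿ be a nonempty closed convex set with 0 ∈ K, and let f̄ : ℝⁿ → ℝ be differentiable with ℓ-Lipschitz gradient which is μ-strongly convex outside a ball of radius R > 0 relative to K, i.e. (x − y)ᵀ(∇f̄(x) − ∇f̄(y)) ≥ μ‖x − y‖² for all x, y ∈ K with ‖x − y‖ ≥ R. Then there exists x* ∈ K such that f̄(x*) = inf_{x ∈ K} f̄(x), i.e. f̄ attains its minimum over K. -/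
open Set Filter
open scoped InnerProductSpace

/-!
On the segment from `0` to `x ∈ K`, strong monotonicity (away from `0`) and the Lipschitz bound
(within distance `R` of `0`) give `⟪∇f̄ (t • x) - ∇f̄ 0, x⟫ ≥ μ t ‖x‖² - (μ + ℓ) R ‖x‖`.
Integrating over `t ∈ [0, 1]` yields the quadratic growth `f̄ x ≥ f̄ 0 + μ/2 ‖x‖² - C ‖x‖` on `K`,
so `f̄` is coercive on the closed set `K` and attains its minimum there.
-/

theorem add_mul_half_le_sub_of_hasDerivAt {φ φ' : ℝ → ℝ} {a b : ℝ}
    (hφ : ∀ t, HasDerivAt φ (φ' t) t) (hφ' : ∀ t ∈ Ioo (0 : ℝ) 1, a + b * t ≤ φ' t) :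
    a + b / 2 ≤ φ 1 - φ 0 := by
  have hψ : ∀ t, HasDerivAt (fun t ↦ φ t - (a * t + b / 2 * t ^ 2)) (φ' t - (a + b * t)) t :=
    fun t ↦ ((hφ t).sub (((hasDerivAt_id' t).const_mul a).add
      ((hasDerivAt_pow 2 t).const_mul (b / 2)))).congr_deriv (by ring)
  have hmono : MonotoneOn (fun t ↦ φ t - (a * t + b / 2 * t ^ 2)) (Icc 0 1) := by
    refine monotoneOn_of_hasDerivWithinAt_nonneg (convex_Icc 0 1)
      (fun t _ ↦ (hψ t).continuousAt.continuousWithinAt)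
      (fun t _ ↦ (hψ t).hasDerivWithinAt) fun t ht ↦ ?_
    rw [interior_Icc] at ht
    linarith [hφ' t ht]
  have := hmono (left_mem_Icc.2 zero_le_one) (right_mem_Icc.2 zero_le_one) zero_le_one
  beta_reduce at this
  linarith

theorem eventually_cocompact_le_of_quadratic_growth {X : Type*} [NormedAddCommGroup X]
    [ProperSpace X] {K : Set X} {f : X → ℝ} {a c C : ℝ} (ha : 0 < a)
    (hf : ∀ x ∈ K, c + (a * ‖x‖ ^ 2 - C * ‖x‖) ≤ f x) :
    ∀ᶠ x in cocompact X ⊓ 𝓟 K, c ≤ f x := by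
  filter_upwards [mem_inf_of_left (tendsto_norm_cocompact_atTop.eventually_ge_atTop (C / a)),
    mem_inf_of_right (mem_principal_self K)] with x hxC hxK
  rw [div_le_iff₀ ha] at hxC
  nlinarith [hf x hxK, mul_le_mul_of_nonneg_left hxC (norm_nonneg x)]

section InnerProductSpace

variable {E : Type*} [NormedAddCommGroup E] [InnerProductSpace ℝ E]

theorem mul_norm_sub_sq_sub_le_inner_sub {g : E → E} {ℓ μ R : ℝ} {x y : E}
    (hμ : 0 ≤ μ) (hR : 0 ≤ R) (hlip : ‖g x - g y‖ ≤ ℓ * ‖x - y‖)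
    (hconv : R ≤ ‖x - y‖ → μ * ‖x - y‖ ^ 2 ≤ ⟪x - y, g x - g y⟫_ℝ) :
    μ * ‖x - y‖ ^ 2 - (μ + ℓ) * R * ‖x - y‖ ≤ ⟪x - y, g x - g y⟫_ℝ := by
  have hℓ : 0 ≤ ℓ * ‖x - y‖ := (norm_nonneg _).trans hlip
  rcases le_or_gt R ‖x - y‖ with hfar | hnear
  · nlinarith [hconv hfar, mul_nonneg hR hℓ, mul_nonneg (mul_nonneg hμ hR) (norm_nonneg (x - y))]
  · have hcs : -(‖x - y‖ * ‖g x - g y‖) ≤ ⟪x - y, g x - g y⟫_ℝ :=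
      neg_le_of_abs_le (abs_real_inner_le_norm _ _)
    nlinarith [mul_le_mul_of_nonneg_left hlip (norm_nonneg (x - y)),
      mul_le_mul_of_nonneg_left hnear.le hℓ,
      mul_le_mul_of_nonneg_left hnear.le (mul_nonneg hμ (norm_nonneg (x - y)))]

variable [CompleteSpace E]

theorem HasGradientAt.hasDerivAt_comp_smul {f : E → ℝ} {g x : E} {t : ℝ}
    (hf : HasGradientAt f g (t • x)) : HasDerivAt (fun s : ℝ ↦ f (s • x)) ⟪g, x⟫_ℝ t := by
  have := hf.hasFDerivAt.comp_hasDerivAt t ((hasDerivAt_id t).smul_const x)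
  simp only [id_eq, one_smul, InnerProductSpace.toDual_apply_apply] at this
  exact this

theorem StarConvex.add_quadratic_le_of_hasGradientAt {K : Set E} {f : E → ℝ} {g : E → E}
    {ℓ μ R : ℝ} (hK : StarConvex ℝ 0 K) (hgrad : ∀ x, HasGradientAt f (g x) x)
    (hμ : 0 ≤ μ) (hR : 0 ≤ R) (hlip : ∀ x y, ‖g x - g y‖ ≤ ℓ * ‖x - y‖)
    (hconv : ∀ x ∈ K, ∀ y ∈ K, R ≤ ‖x - y‖ → μ * ‖x - y‖ ^ 2 ≤ ⟪x - y, g x - g y⟫_ℝ)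
    {x : E} (hx : x ∈ K) :
    f 0 + (μ / 2 * ‖x‖ ^ 2 - (‖g 0‖ + (μ + ℓ) * R) * ‖x‖) ≤ f x := by
  have h0K : (0 : E) ∈ K := by simpa using hK.smul_mem hx le_rfl zero_le_one
  have hslope : ∀ t ∈ Ioo (0 : ℝ) 1,
      (⟪g 0, x⟫_ℝ - (μ + ℓ) * R * ‖x‖) + μ * ‖x‖ ^ 2 * t ≤ ⟪g (t • x), x⟫_ℝ := by
    rintro t ⟨ht0, ht1⟩
    have htx := hK.smul_mem hx ht0.le ht1.le
    have hsegment := mul_norm_sub_sq_sub_le_inner_sub hμ hR (hlip (t • x) 0)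
      (hconv _ htx _ h0K)
    simp only [sub_zero, norm_smul, Real.norm_of_nonneg ht0.le, real_inner_smul_left] at hsegment
    have hsplit : ⟪g (t • x), x⟫_ℝ = ⟪g 0, x⟫_ℝ + ⟪x, g (t • x) - g 0⟫_ℝ := by
      rw [inner_sub_right, real_inner_comm x, real_inner_comm x]; ring
    rw [hsplit]
    nlinarith
  have hgrowth := add_mul_half_le_sub_of_hasDerivAt
    (fun t ↦ (hgrad (t • x)).hasDerivAt_comp_smul) hslope
  simp only [one_smul, _root_.zero_smul] at hgrowth
  nlinarith [neg_le_of_abs_le (abs_real_inner_le_norm (g 0) x)]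

end InnerProductSpace

theorem exists_min_of_strongly_convex_outside_ball_general
    {n : ℕ} {K : Set (EuclideanSpace ℝ (Fin n))}
    (hK_cl : IsClosed K) (hK_conv : Convex ℝ K)
    (h0K : (0 : EuclideanSpace ℝ (Fin n)) ∈ K)
    (fbar : EuclideanSpace ℝ (Fin n) → ℝ)
    (gbar : EuclideanSpace ℝ (Fin n) → EuclideanSpace ℝ (Fin n))
    (hgrad : ∀ x, HasGradientAt fbar (gbar x) x)
    (ℓ μ R : ℝ) (hμ : 0 < μ) (hR : 0 < R)
    (hlip : ∀ x y, ‖gbar x - gbar y‖ ≤ ℓ * ‖x - y‖)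
    (hconv : ∀ x ∈ K, ∀ y ∈ K, R ≤ ‖x - y‖ →
      μ * ‖x - y‖ ^ 2 ≤ ⟪x - y, gbar x - gbar y⟫_ℝ) :
    ∃ xstar ∈ K, ∀ x ∈ K, fbar xstar ≤ fbar x := by
  have hcont : Continuous fbar := continuous_iff_continuousAt.2 fun x ↦ (hgrad x).continuousAt
  have hgrowth := fun x (hx : x ∈ K) ↦ (hK_conv.starConvex h0K).add_quadratic_le_of_hasGradientAt
    hgrad hμ.le hR.le hlip hconv hx
  obtain ⟨xstar, hxK, hmin⟩ := hcont.continuousOn.exists_isMinOn' hK_cl h0K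
    (eventually_cocompact_le_of_quadratic_growth (half_pos hμ) hgrowth)
  exact ⟨xstar, hxK, fun x hx ↦ hmin hx⟩

/-- If `f̄` has an `ℓ`-Lipschitz gradient and is `μ`-strongly convex outside a
ball of radius `R` relative to a nonempty closed convex set `K` containing `0`, then `f̄`
attains its minimum over `K`. -/
theorem exists_min_of_strongly_convex_outside_ball
    {n : ℕ} {K : Set (EuclideanSpace ℝ (Fin n))}
    (hK_ne : K.Nonempty) (hK_cl : IsClosed K) (hK_conv : Convex ℝ K)
    (h0K : (0 : EuclideanSpace ℝ (Fin n)) ∈ K)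
    (fbar : EuclideanSpace ℝ (Fin n) → ℝ)
    (gbar : EuclideanSpace ℝ (Fin n) → EuclideanSpace ℝ (Fin n))
    (hgrad : ∀ x, HasGradientAt fbar (gbar x) x)
    (ℓ μ R : ℝ) (hℓ : 0 < ℓ) (hμ : 0 < μ) (hR : 0 < R)
    (hlip : ∀ x y, ‖gbar x - gbar y‖ ≤ ℓ * ‖x - y‖)
    (hconv : ∀ x ∈ K, ∀ y ∈ K, R ≤ ‖x - y‖ →
      μ * ‖x - y‖ ^ 2 ≤ ⟪x - y, gbar x - gbar y⟫_ℝ) :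
    ∃ xstar ∈ K, ∀ x ∈ K, fbar xstar ≤ fbar x :=
  exists_min_of_strongly_convex_outside_ball_general hK_cl hK_conv h0K fbar gbar hgrad ℓ μ R hμ hR
    hlip hconv
end

section
/- Let K ⊆ ℝⁿ be a closed convex set with 0 ∈ K, and let f̄ : ℝⁿ → ℝ be differentiable with ℓ-Lipschitz gradient which is μ-strongly convex outside a ball of radius R > 0 relative to K, i.e. (x − y)ᵀ(∇f̄(x) − ∇f̄(y)) ≥ μ‖x − y‖² for all x, y ∈ K with ‖x − y‖ ≥ R. If x* ∈ K minimizes f̄ over K, then ‖x*‖ ≤ max{R, ‖∇f̄(0)‖/μ}. -/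
/-! If `‖x*‖ > R`, strong convexity between `x*` and `0` and the first-order optimality condition
`⟪∇f̄(x*), 0 - x*⟫ ≥ 0` give `μ‖x*‖² ≤ ⟪x*, ∇f̄(x*) - ∇f̄(0)⟫ ≤ -⟪x*, ∇f̄(0)⟫ ≤ ‖x*‖‖∇f̄(0)‖`. -/

open scoped InnerProductSpace

theorem IsMinOn.inner_sub_nonneg_of_hasGradientWithinAt {E : Type*} [NormedAddCommGroup E]
    [InnerProductSpace ℝ E] [CompleteSpace E] {f : E → ℝ} {K : Set E} {x y g : E}
    (hmin : IsMinOn f K x) (hK : Convex ℝ K) (hx : x ∈ K) (hy : y ∈ K)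
    (hf : HasGradientWithinAt f g K x) : 0 ≤ ⟪g, y - x⟫_ℝ := by
  have hdir : y - x ∈ posTangentConeAt K x :=
    sub_mem_posTangentConeAt_of_segment_subset (hK.segment_subset hx hy)
  simpa using hmin.localize.hasFDerivWithinAt_nonneg hf.hasFDerivWithinAt hdir

theorem norm_le_norm_div_of_mul_sq_le_inner_sub {E : Type*} [NormedAddCommGroup E]
    [InnerProductSpace ℝ E] {μ : ℝ} (hμ : 0 < μ) {x u v : E}
    (hmono : μ * ‖x‖ ^ 2 ≤ ⟪x, u - v⟫_ℝ) (hu : ⟪x, u⟫_ℝ ≤ 0) : ‖x‖ ≤ ‖v‖ / μ := by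
  have hsq : μ * ‖x‖ ^ 2 ≤ ‖x‖ * ‖v‖ := calc
    μ * ‖x‖ ^ 2 ≤ ⟪x, u⟫_ℝ - ⟪x, v⟫_ℝ := by rwa [← inner_sub_right]
    _ ≤ -⟪x, v⟫_ℝ := by linarith
    _ ≤ ‖x‖ * ‖v‖ := (neg_le_abs _).trans (abs_real_inner_le_norm x v)
  rw [le_div_iff₀ hμ]
  rcases (norm_nonneg x).eq_or_lt with hx | hx
  · simp [← hx]
  · nlinarith

theorem norm_min_le_of_strongly_convex_outside_ball_general
    {n : ℕ} {K : Set (EuclideanSpace ℝ (Fin n))}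
    (hK_conv : Convex ℝ K)
    (h0K : (0 : EuclideanSpace ℝ (Fin n)) ∈ K)
    (fbar : EuclideanSpace ℝ (Fin n) → ℝ)
    (gbar : EuclideanSpace ℝ (Fin n) → EuclideanSpace ℝ (Fin n))
    (hgrad : ∀ x, HasGradientAt fbar (gbar x) x)
    (μ R : ℝ) (hμ : 0 < μ)
    (hconv : ∀ x ∈ K, ∀ y ∈ K, R ≤ ‖x - y‖ →
      μ * ‖x - y‖ ^ 2 ≤ ⟪x - y, gbar x - gbar y⟫_ℝ)
    (xstar : EuclideanSpace ℝ (Fin n)) (hxK : xstar ∈ K)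
    (hmin : ∀ x ∈ K, fbar xstar ≤ fbar x) :
    ‖xstar‖ ≤ max R (‖gbar 0‖ / μ) := by
  rcases le_or_gt ‖xstar‖ R with hnear | hfar
  · exact le_max_of_le_left hnear
  have hopt : 0 ≤ ⟪gbar xstar, 0 - xstar⟫_ℝ :=
    (isMinOn_iff.2 hmin).inner_sub_nonneg_of_hasGradientWithinAt hK_conv hxK h0K
      (hgrad xstar).hasFDerivAt.hasFDerivWithinAt
  have hmono := hconv xstar hxK 0 h0K (by simpa using hfar.le)
  rw [sub_zero] at hmono
  refine le_max_of_le_right (norm_le_norm_div_of_mul_sq_le_inner_sub hμ hmono ?_)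
  rw [zero_sub, inner_neg_right, real_inner_comm] at hopt
  linarith

/-- If `f̄` has an `ℓ`-Lipschitz gradient and is `μ`-strongly convex outside a
ball of radius `R` relative to a closed convex set `K` containing `0`, and `x*` minimizes `f̄`
over `K`, then `‖x*‖ ≤ max {R, ‖∇f̄(0)‖/μ}`. -/
theorem norm_min_le_of_strongly_convex_outside_ball
    {n : ℕ} {K : Set (EuclideanSpace ℝ (Fin n))}
    (hK_cl : IsClosed K) (hK_conv : Convex ℝ K)
    (h0K : (0 : EuclideanSpace ℝ (Fin n)) ∈ K)
    (fbar : EuclideanSpace ℝ (Fin n) → ℝ)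
    (gbar : EuclideanSpace ℝ (Fin n) → EuclideanSpace ℝ (Fin n))
    (hgrad : ∀ x, HasGradientAt fbar (gbar x) x)
    (ℓ μ R : ℝ) (hℓ : 0 < ℓ) (hμ : 0 < μ) (hR : 0 < R)
    (hlip : ∀ x y, ‖gbar x - gbar y‖ ≤ ℓ * ‖x - y‖)
    (hconv : ∀ x ∈ K, ∀ y ∈ K, R ≤ ‖x - y‖ →
      μ * ‖x - y‖ ^ 2 ≤ ⟪x - y, gbar x - gbar y⟫_ℝ)
    (xstar : EuclideanSpace ℝ (Fin n)) (hxK : xstar ∈ K)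
    (hmin : ∀ x ∈ K, fbar xstar ≤ fbar x) :
    ‖xstar‖ ≤ max R (‖gbar 0‖ / μ) :=
  norm_min_le_of_strongly_convex_outside_ball_general hK_conv h0K fbar gbar hgrad μ R hμ hconv xstar
    hxK hmin
end

section
/- Let β, ℓ, μ, R > 0. Define h(s) = (ℓβ/8)·min{s², R²}, φ(s) = e^{−h(s)}, Φ(s) = ∫₀^s φ(r) dr, and R₁ = R/2 + (1/2)·√( R² + (32/(μβ))·e^{βℓR²/8} ). Then ∫₀^{R₁} Φ(s)·φ(s)^{−1} ds ≤ ( R²/2 + 16/(μβ) )·e^{βℓR²/4}. -/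
open Real Set MeasureTheory
open scoped Interval

/-! With `a = ℓβ/8` we have `e^{-aR²} ≤ φ ≤ 1`, hence `Φ(s) ≤ s` and `φ(s)⁻¹ ≤ e^{aR²}`, so the
integral is at most `R₁² e^{aR²} / 2`. Writing `R₁ = (R + S)/2` with `S² = R² + (32/(μβ)) e^{aR²}`,
the bound `R₁² ≤ (R² + S²)/2` together with `1 ≤ e^{aR²}` gives the constant. -/

theorem primitive_mul_inv_mem_Icc {φ : ℝ → ℝ} {δ s : ℝ} (hδ : 0 < δ) (hs : 0 ≤ s)
    (hφ : ∀ r ∈ Icc 0 s, δ ≤ φ r ∧ φ r ≤ 1) :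
    (∫ r in 0..s, φ r) * (φ s)⁻¹ ∈ Icc 0 (s / δ) := by
  have hφ_nonneg : ∀ r ∈ Icc 0 s, 0 ≤ φ r := fun r hr => hδ.le.trans (hφ r hr).1
  have hΦ_nonneg : 0 ≤ ∫ r in 0..s, φ r := intervalIntegral.integral_nonneg hs hφ_nonneg
  have hΦ_le : ∫ r in 0..s, φ r ≤ s := by
    have hnorm : ∀ r ∈ Ι 0 s, ‖φ r‖ ≤ 1 := fun r hr => by
      rw [uIoc_of_le hs] at hr
      rw [Real.norm_eq_abs, abs_of_nonneg (hφ_nonneg r (Ioc_subset_Icc_self hr))]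
      exact (hφ r (Ioc_subset_Icc_self hr)).2
    simpa [abs_of_nonneg hs] using
      (le_abs_self _).trans (intervalIntegral.norm_integral_le_of_norm_le_const hnorm)
  have hφs := hφ s ⟨hs, le_rfl⟩
  have hinv_nonneg : 0 ≤ (φ s)⁻¹ := inv_nonneg.2 (hφ_nonneg s ⟨hs, le_rfl⟩)
  refine ⟨mul_nonneg hΦ_nonneg hinv_nonneg, ?_⟩
  calc (∫ r in 0..s, φ r) * (φ s)⁻¹ ≤ s * δ⁻¹ :=
        mul_le_mul hΦ_le (inv_anti₀ hδ hφs.1) hinv_nonneg hs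
    _ = s / δ := (div_eq_mul_inv s δ).symm

theorem integral_primitive_mul_inv_le {φ : ℝ → ℝ} {δ T : ℝ} (hδ : 0 < δ) (hT : 0 ≤ T)
    (hφ : ∀ r ∈ Icc 0 T, δ ≤ φ r ∧ φ r ≤ 1) :
    ∫ s in 0..T, (∫ r in 0..s, φ r) * (φ s)⁻¹ ≤ T ^ 2 / (2 * δ) := by
  have hbound : ∀ s ∈ Ioc 0 T, (∫ r in 0..s, φ r) * (φ s)⁻¹ ∈ Icc 0 (s / δ) :=
    fun s hs => primitive_mul_inv_mem_Icc hδ hs.1.le fun r hr => hφ r ⟨hr.1, hr.2.trans hs.2⟩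
  -- Nonnegativity of the integrand stands in for its integrability.
  calc ∫ s in 0..T, (∫ r in 0..s, φ r) * (φ s)⁻¹ ≤ ∫ s in 0..T, s / δ := by
        rw [intervalIntegral.integral_of_le hT, intervalIntegral.integral_of_le hT]
        refine integral_mono_of_nonneg ?_ (continuous_id.div_const δ).integrableOn_Ioc ?_
        · exact (ae_restrict_iff' measurableSet_Ioc).2 <| ae_of_all _ fun s hs => (hbound s hs).1
        · exact (ae_restrict_iff' measurableSet_Ioc).2 <| ae_of_all _ fun s hs => (hbound s hs).2
    _ = T ^ 2 / (2 * δ) := by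
        rw [intervalIntegral.integral_div, integral_id]
        ring

theorem exp_neg_mul_min_mem_Icc {a x y : ℝ} (ha : 0 ≤ a) (hx : 0 ≤ x) (hy : 0 ≤ y) :
    exp (-a * min x y) ∈ Icc (exp (-a * y)) 1 := by
  constructor
  · exact exp_le_exp.2 (by nlinarith [min_le_right x y])
  · exact exp_le_one_iff.2 (by nlinarith [le_min hx hy])

theorem sq_half_add_half_sqrt_le {R x : ℝ} (hx : 0 ≤ x) :
    (R / 2 + 1 / 2 * √(R ^ 2 + x)) ^ 2 ≤ R ^ 2 + x / 2 := by
  have hsq : √(R ^ 2 + x) ^ 2 = R ^ 2 + x := sq_sqrt (by positivity)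
  nlinarith [sq_nonneg (R - √(R ^ 2 + x))]

theorem neg_le_sqrt_sq_add {R x : ℝ} (hx : 0 ≤ x) : -R ≤ √(R ^ 2 + x) :=
  (neg_le_abs R).trans (abs_le_sqrt (by linarith))

theorem xi_inverse_integral_bound_general
    (β ℓ μ R : ℝ) (hβ : 0 < β) (hℓ : 0 < ℓ) (hμ : 0 < μ) :
    (∫ s in (0 : ℝ)..(R / 2 +
        (1 / 2) * Real.sqrt (R ^ 2 + (32 / (μ * β)) * Real.exp (β * ℓ * R ^ 2 / 8))),
      (∫ r in (0 : ℝ)..s, Real.exp (-(ℓ * β / 8) * min (r ^ 2) (R ^ 2))) *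
        (Real.exp (-(ℓ * β / 8) * min (s ^ 2) (R ^ 2)))⁻¹)
      ≤ (R ^ 2 / 2 + 16 / (μ * β)) * Real.exp (β * ℓ * R ^ 2 / 4) := by
  set E := exp (β * ℓ * R ^ 2 / 8)
  set m := 16 / (μ * β)
  have hE : 1 ≤ E := one_le_exp (by positivity)
  have hm : 0 ≤ m := by positivity
  have hx : 0 ≤ 32 / (μ * β) * E := by positivity
  have hE_inv : exp (-(ℓ * β / 8) * R ^ 2) = E⁻¹ := by rw [← exp_neg]; ring_nf
  have hE_sq : exp (β * ℓ * R ^ 2 / 4) = E ^ 2 := by rw [← exp_nat_mul]; ring_nf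
  have hR₁ : 0 ≤ R / 2 + 1 / 2 * √(R ^ 2 + 32 / (μ * β) * E) := by
    linarith [neg_le_sqrt_sq_add (R := R) hx]
  calc _ ≤ (R / 2 + 1 / 2 * √(R ^ 2 + 32 / (μ * β) * E)) ^ 2 / (2 * E⁻¹) :=
        integral_primitive_mul_inv_le (inv_pos.2 (exp_pos _)) hR₁ fun r _ => hE_inv ▸
          exp_neg_mul_min_mem_Icc (by positivity) (sq_nonneg r) (sq_nonneg R)
    _ ≤ (R ^ 2 + m * E) * E / 2 := by
        have h32 : 32 / (μ * β) * E / 2 = m * E := by ring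
        rw [div_mul_eq_div_div, div_inv_eq_mul, div_mul_eq_mul_div, ← h32]
        gcongr
        exact sq_half_add_half_sqrt_le hx
    _ ≤ (R ^ 2 / 2 + m) * exp (β * ℓ * R ^ 2 / 4) := by
        rw [hE_sq]
        nlinarith [mul_le_mul_of_nonneg_left hE (sq_nonneg R), mul_nonneg hm (by linarith : 0 ≤ E)]

/-- With `h(s) = (ℓβ/8)·min{s², R²}`, `φ = e^{-h}`, `Φ(s) = ∫₀ˢ φ`, and
`R₁ = R/2 + (1/2)√(R² + (32/(μβ))·e^{βℓR²/8})`, one has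
`∫₀^{R₁} Φ(s) φ(s)⁻¹ ds ≤ (R²/2 + 16/(μβ))·e^{βℓR²/4}`. -/
theorem xi_inverse_integral_bound
    (β ℓ μ R : ℝ) (hβ : 0 < β) (hℓ : 0 < ℓ) (hμ : 0 < μ) (hR : 0 < R) :
    (∫ s in (0 : ℝ)..(R / 2 +
        (1 / 2) * Real.sqrt (R ^ 2 + (32 / (μ * β)) * Real.exp (β * ℓ * R ^ 2 / 8))),
      (∫ r in (0 : ℝ)..s, Real.exp (-(ℓ * β / 8) * min (r ^ 2) (R ^ 2))) *
        (Real.exp (-(ℓ * β / 8) * min (s ^ 2) (R ^ 2)))⁻¹)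
      ≤ (R ^ 2 / 2 + 16 / (μ * β)) * Real.exp (β * ℓ * R ^ 2 / 4) :=
  xi_inverse_integral_bound_general β ℓ μ R hβ hℓ hμ
end

section
/- Let K ⊆ ℝⁿ be a convex set with 0 ∈ K, and let f̄ : ℝⁿ → ℝ be differentiable with ℓ-Lipschitz gradient. Let m ∈ ℝ and R̂ > 0 be such that f̄(x) ≥ m for every x ∈ K with ‖x‖ ≥ R̂. Then the truncated function g(x) = min{f̄(x), m} satisfies |g(x) − g(y)| ≤ (‖∇f̄(0)‖ + ℓ·R̂)·‖x − y‖ for all x, y ∈ K. -/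
open Set

/-!
On the ball `‖x‖ ≤ R̂` the gradient has norm at most `‖∇f̄(0)‖ + ℓR̂`, so `f̄`, and hence the
truncation `min(f̄, m)`, is Lipschitz there with that constant. Outside the ball the truncation
is the constant `m`. For `x` inside and `y` outside, the segment `[x, y] ⊆ K` crosses the sphere
`‖z‖ = R̂` at some `z`, where the truncation is already `m`, and `‖x - z‖ ≤ ‖x - y‖`.
-/

theorem abs_min_sub_min_const_le {α : Type*} [AddCommGroup α] [LinearOrder α]
    [IsOrderedAddMonoid α] (a b m : α) : |min a m - min b m| ≤ |a - b| := by
  simpa using abs_min_sub_min_le_max a m b m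

theorem norm_le_add_mul_of_lipschitz {E F : Type*} [SeminormedAddCommGroup E]
    [SeminormedAddCommGroup F] {g : E → F}
    {ℓ R : ℝ} (hℓ : 0 ≤ ℓ) (hg : ∀ x y, ‖g x - g y‖ ≤ ℓ * ‖x - y‖) {z : E} (hz : ‖z‖ ≤ R) :
    ‖g z‖ ≤ ‖g 0‖ + ℓ * R :=
  calc ‖g z‖ ≤ ‖g 0‖ + ‖g z - g 0‖ := norm_le_insert' _ _
    _ ≤ ‖g 0‖ + ℓ * ‖z - 0‖ := by gcongr; exact hg z 0
    _ ≤ ‖g 0‖ + ℓ * R := by rw [sub_zero]; gcongr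

theorem Convex.abs_sub_le_of_norm_hasGradientAt_le {F : Type*} [NormedAddCommGroup F]
    [InnerProductSpace ℝ F] [CompleteSpace F] {s : Set F} (hs : Convex ℝ s) {f : F → ℝ}
    {f' : F → F} (hf : ∀ x ∈ s, HasGradientAt f (f' x) x) {C : ℝ} (hC : ∀ x ∈ s, ‖f' x‖ ≤ C)
    {x y : F} (hx : x ∈ s) (hy : y ∈ s) :
    |f x - f y| ≤ C * ‖x - y‖ := by
  have := hs.norm_image_sub_le_of_norm_hasFDerivWithin_le
    (fun z hz ↦ (hasGradientAt_iff_hasFDerivAt.mp (hf z hz)).hasFDerivWithinAt)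
    (fun z hz ↦ ((InnerProductSpace.toDual ℝ F).norm_map (f' z)).trans_le (hC z hz)) hy hx
  simpa only [Real.norm_eq_abs] using this

section

variable {E : Type*} [NormedAddCommGroup E] [NormedSpace ℝ E]

theorem exists_mem_segment_norm_eq {x y : E} {r : ℝ} (hx : ‖x‖ ≤ r) (hy : r ≤ ‖y‖) :
    ∃ z ∈ segment ℝ x y, ‖z‖ = r :=
  (convex_segment x y).isPreconnected.intermediate_value (left_mem_segment ℝ x y)
    (right_mem_segment ℝ x y) continuous_norm.continuousOn ⟨hx, hy⟩

theorem abs_min_sub_min_le_of_lipschitz_on_closedBall {K : Set E} (hK : Convex ℝ K) {f : E → ℝ}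
    {L R m : ℝ} (hL : 0 ≤ L)
    (hf : ∀ x ∈ Metric.closedBall 0 R, ∀ y ∈ Metric.closedBall 0 R, |f x - f y| ≤ L * ‖x - y‖)
    (hfar : ∀ x ∈ K, R ≤ ‖x‖ → m ≤ f x) {x y : E} (hx : x ∈ K) (hy : y ∈ K) :
    |min (f x) m - min (f y) m| ≤ L * ‖x - y‖ := by
  wlog hxy : ‖x‖ ≤ ‖y‖ generalizing x y
  · rw [abs_sub_comm, norm_sub_rev]
    exact this hy hx (le_of_not_ge hxy)
  rcases le_total ‖y‖ R with hyR | hRy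
  · exact (abs_min_sub_min_const_le _ _ m).trans
      (hf x (by simpa using hxy.trans hyR) y (by simpa using hyR))
  have hmy : min (f y) m = m := min_eq_right (hfar y hy hRy)
  rcases le_total R ‖x‖ with hRx | hxR
  · rw [min_eq_right (hfar x hx hRx), hmy, sub_self, abs_zero]
    positivity
  obtain ⟨z, hz, hzR⟩ := exists_mem_segment_norm_eq hxR hRy
  have hmz : min (f z) m = m := min_eq_right (hfar z (hK.segment_subset hx hy hz) hzR.ge)
  have hxz : ‖x - z‖ ≤ ‖x - y‖ := by
    simpa only [← dist_eq_norm] using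
      (dist_add_dist_of_mem_segment hz).le.trans' (le_add_of_nonneg_right dist_nonneg)
  calc |min (f x) m - min (f y) m| = |min (f x) m - min (f z) m| := by rw [hmy, hmz]
    _ ≤ L * ‖x - z‖ := (abs_min_sub_min_const_le _ _ m).trans
        (hf x (by simpa using hxR) z (by simp [hzR]))
    _ ≤ L * ‖x - y‖ := by gcongr

end

theorem truncation_lipschitz_on_general
    {n : ℕ} {K : Set (EuclideanSpace ℝ (Fin n))}
    (hK_conv : Convex ℝ K)
    (fbar : EuclideanSpace ℝ (Fin n) → ℝ)
    (gbar : EuclideanSpace ℝ (Fin n) → EuclideanSpace ℝ (Fin n))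
    (hgrad : ∀ x, HasGradientAt fbar (gbar x) x)
    (ℓ : ℝ) (hℓ : 0 < ℓ)
    (hlip : ∀ x y, ‖gbar x - gbar y‖ ≤ ℓ * ‖x - y‖)
    (m Rhat : ℝ) (hRhat : 0 < Rhat)
    (hfar : ∀ x ∈ K, Rhat ≤ ‖x‖ → m ≤ fbar x) :
    ∀ x ∈ K, ∀ y ∈ K,
      |min (fbar x) m - min (fbar y) m| ≤ (‖gbar 0‖ + ℓ * Rhat) * ‖x - y‖ := by
  have hgrad_bound : ∀ z ∈ Metric.closedBall 0 Rhat, ‖gbar z‖ ≤ ‖gbar 0‖ + ℓ * Rhat :=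
    fun z hz ↦ norm_le_add_mul_of_lipschitz hℓ.le hlip (by simpa using hz)
  intro x hx y hy
  exact abs_min_sub_min_le_of_lipschitz_on_closedBall hK_conv (by positivity)
    (fun x hx y hy ↦ (convex_closedBall 0 Rhat).abs_sub_le_of_norm_hasGradientAt_le
      (fun z _ ↦ hgrad z) hgrad_bound hx hy) hfar hx hy

/-- If `f̄` has an `ℓ`-Lipschitz gradient and `f̄(x) ≥ m` for all `x ∈ K`
with `‖x‖ ≥ R̂`, then the truncation `g = min(f̄, m)` is `(‖∇f̄(0)‖ + ℓ·R̂)`-Lipschitz on the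
convex set `K` (which contains `0`). -/
theorem truncation_lipschitz_on
    {n : ℕ} {K : Set (EuclideanSpace ℝ (Fin n))}
    (hK_conv : Convex ℝ K) (h0K : (0 : EuclideanSpace ℝ (Fin n)) ∈ K)
    (fbar : EuclideanSpace ℝ (Fin n) → ℝ)
    (gbar : EuclideanSpace ℝ (Fin n) → EuclideanSpace ℝ (Fin n))
    (hgrad : ∀ x, HasGradientAt fbar (gbar x) x)
    (ℓ : ℝ) (hℓ : 0 < ℓ)
    (hlip : ∀ x y, ‖gbar x - gbar y‖ ≤ ℓ * ‖x - y‖)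
    (m Rhat : ℝ) (hRhat : 0 < Rhat)
    (hfar : ∀ x ∈ K, Rhat ≤ ‖x‖ → m ≤ fbar x) :
    ∀ x ∈ K, ∀ y ∈ K,
      |min (fbar x) m - min (fbar y) m| ≤ (‖gbar 0‖ + ℓ * Rhat) * ‖x - y‖ :=
  truncation_lipschitz_on_general hK_conv fbar gbar hgrad ℓ hℓ hlip m Rhat hRhat hfar
end

section
/- Let q > 1 be a real number, let ℓ > 0 and c₀ ∈ ℝ, and let f̄ : ℝⁿ → ℝ be a measurable function satisfying f̄(x) ≤ c₀ + ℓ‖x‖² for all x ∈ ℝⁿ. Let X be an ℝⁿ-valued random vector with E[‖X‖^{2q}] < ∞, and let m > 0 satisfy m/2 > c₀. Then E[ 1{f̄(X) > m}·(f̄(X) − m) ] ≤ E[‖X‖^{2q}]·ℓ^q·2^{q−1} / ((q−1)·m^{q−1}). -/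
/-!
Pointwise, `f̄(x) - m ≤ ℓ‖x‖² - m/2` because `c₀ < m/2`, and the Bernoulli inequality gives
`y - a ≤ y^q / ((q-1) a^(q-1))` for `y ≥ 0`, `a > 0`. Taking `y = ℓ‖x‖²`, `a = m/2` bounds the
excess `1{f̄(x) > m}(f̄(x) - m)` by a constant multiple of `‖x‖^{2q}`; integrate.
-/

open MeasureTheory

lemma sub_one_mul_sub_one_le_rpow {q t : ℝ} (hq : 1 ≤ q) (ht : 0 ≤ t) :
    (q - 1) * (t - 1) ≤ t ^ q := by
  have bernoulli := one_add_mul_self_le_rpow_one_add (s := t - 1) (by linarith) hq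
  rw [add_sub_cancel] at bernoulli
  linarith

lemma sub_le_rpow_div {q a y : ℝ} (hq : 1 < q) (ha : 0 < a) (hy : 0 ≤ y) :
    y - a ≤ y ^ q / ((q - 1) * a ^ (q - 1)) := by
  have hq1 : 0 < q - 1 := by linarith
  have haq1 : 0 < a ^ (q - 1) := Real.rpow_pos_of_pos ha _
  have hscaled := mul_le_mul_of_nonneg_left
    (sub_one_mul_sub_one_le_rpow hq.le (div_nonneg hy ha.le)) (Real.rpow_nonneg ha.le q)
  have hyq : a ^ q * (y / a) ^ q = y ^ q := by
    rw [← Real.mul_rpow ha.le (div_nonneg hy ha.le), mul_div_cancel₀ _ ha.ne']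
  have haq : a ^ q = a ^ (q - 1) * a := by
    rw [← Real.rpow_add_one ha.ne', sub_add_cancel]
  rw [hyq, haq] at hscaled
  rw [le_div_iff₀ (by positivity)]
  calc (y - a) * ((q - 1) * a ^ (q - 1))
      = a ^ (q - 1) * a * ((q - 1) * (y / a - 1)) := by field_simp
    _ ≤ y ^ q := hscaled

lemma indicator_sub_le_mul_rpow_norm {E : Type*} [SeminormedAddCommGroup E] {f : E → ℝ}
    {q ℓ c₀ m : ℝ} (hq : 1 < q) (hℓ : 0 < ℓ) (hm : 0 < m) (hmc : c₀ < m / 2)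
    (hf : ∀ x, f x ≤ c₀ + ℓ * ‖x‖ ^ 2) (x : E) :
    {x | m < f x}.indicator (fun x => f x - m) x
      ≤ ‖x‖ ^ (2 * q) * (ℓ ^ q * 2 ^ (q - 1) / ((q - 1) * m ^ (q - 1))) := by
  by_cases hx : m < f x
  · rw [Set.indicator_of_mem (show x ∈ {x | m < f x} from hx)]
    have hbound := sub_le_rpow_div hq (half_pos hm) (by positivity : 0 ≤ ℓ * ‖x‖ ^ 2)
    have hpow : (ℓ * ‖x‖ ^ 2) ^ q = ℓ ^ q * ‖x‖ ^ (2 * q) := by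
      rw [Real.mul_rpow hℓ.le (by positivity), ← Real.rpow_natCast, ← Real.rpow_mul (norm_nonneg _)]
      norm_num
    have hhalf : (m / 2) ^ (q - 1) = m ^ (q - 1) / 2 ^ (q - 1) := Real.div_rpow hm.le zero_le_two _
    have hq1 : q - 1 ≠ 0 := by linarith
    have hmq : m ^ (q - 1) ≠ 0 := (Real.rpow_pos_of_pos hm _).ne'
    rw [hpow, hhalf] at hbound
    calc f x - m ≤ ℓ * ‖x‖ ^ 2 - m / 2 := by linarith [hf x]
      _ ≤ _ := hbound
      _ = _ := by field_simp
  · rw [Set.indicator_of_notMem (show x ∉ {x | m < f x} from hx)]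
    positivity

theorem tail_expectation_bound_general
    {Ω : Type*} [MeasurableSpace Ω] (P : Measure Ω)
    {n : ℕ} (q ℓ c₀ m : ℝ) (hq : 1 < q) (hℓ : 0 < ℓ)
    (fbar : EuclideanSpace ℝ (Fin n) → ℝ)
    (hf_bound : ∀ x, fbar x ≤ c₀ + ℓ * ‖x‖ ^ 2)
    (X : Ω → EuclideanSpace ℝ (Fin n))
    (hX_mom : Integrable (fun ω => ‖X ω‖ ^ (2 * q)) P)
    (hm : 0 < m) (hmc : c₀ < m / 2) :
    (∫ ω, Set.indicator {ω | m < fbar (X ω)} (fun ω => fbar (X ω) - m) ω ∂P)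
      ≤ (∫ ω, ‖X ω‖ ^ (2 * q) ∂P) * ℓ ^ q * 2 ^ (q - 1) / ((q - 1) * m ^ (q - 1)) := by
  set C := ℓ ^ q * 2 ^ (q - 1) / ((q - 1) * m ^ (q - 1))
  have hexcess_nonneg : ∀ ω, 0 ≤ {ω | m < fbar (X ω)}.indicator (fun ω => fbar (X ω) - m) ω :=
    fun ω => Set.indicator_nonneg (fun ω (hω : m < fbar (X ω)) => by linarith) ω
  have hexcess_le : ∀ ω, {ω | m < fbar (X ω)}.indicator (fun ω => fbar (X ω) - m) ω
      ≤ ‖X ω‖ ^ (2 * q) * C :=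
    fun ω => indicator_sub_le_mul_rpow_norm hq hℓ hm hmc hf_bound (X ω)
  calc (∫ ω, {ω | m < fbar (X ω)}.indicator (fun ω => fbar (X ω) - m) ω ∂P)
      ≤ ∫ ω, ‖X ω‖ ^ (2 * q) * C ∂P :=
        integral_mono_of_nonneg (.of_forall hexcess_nonneg) (hX_mom.mul_const C)
          (.of_forall hexcess_le)
    _ = (∫ ω, ‖X ω‖ ^ (2 * q) ∂P) * C := integral_mul_const C _
    _ = _ := by ring

/-- If `f̄(x) ≤ c₀ + ℓ‖x‖²`, `E[‖X‖^{2q}] < ∞` and `m/2 > c₀` with `m > 0`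
and `q > 1`, then `E[1{f̄(X) > m}·(f̄(X) - m)] ≤ E[‖X‖^{2q}]·ℓ^q·2^{q-1}/((q-1)·m^{q-1})`. -/
theorem tail_expectation_bound
    {Ω : Type*} [MeasurableSpace Ω] (P : Measure Ω) [IsProbabilityMeasure P]
    {n : ℕ} (q ℓ c₀ m : ℝ) (hq : 1 < q) (hℓ : 0 < ℓ)
    (fbar : EuclideanSpace ℝ (Fin n) → ℝ) (hf_meas : Measurable fbar)
    (hf_bound : ∀ x, fbar x ≤ c₀ + ℓ * ‖x‖ ^ 2)
    (X : Ω → EuclideanSpace ℝ (Fin n)) (hX_meas : Measurable X)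
    (hX_mom : Integrable (fun ω => ‖X ω‖ ^ (2 * q)) P)
    (hm : 0 < m) (hmc : c₀ < m / 2) :
    (∫ ω, Set.indicator {ω | m < fbar (X ω)} (fun ω => fbar (X ω) - m) ω ∂P)
      ≤ (∫ ω, ‖X ω‖ ^ (2 * q) ∂P) * ℓ ^ q * 2 ^ (q - 1) / ((q - 1) * m ^ (q - 1)) :=
  tail_expectation_bound_general P q ℓ c₀ m hq hℓ fbar hf_bound X hX_mom hm hmc
end
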